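/- arXiv:2010.12665 — 2 statements merged into one kernel-verified Lean document; each statement's English description precedes it below -/
import Mathlib

section
/- Let ω = (5 + i√11)/6 ∈ ℂ, which satisfies |ω| = 1. Let S ⊆ ℂ be finite and let p, q ∈ S be a monochromatic pair of S (every proper 4-coloring of the unit-distance graph on S assigns p and q the same color). Set q′ = p + ω·(q − p) and S′ = S ∪ {p + ω·(z − p) : z ∈ S}. Then |q − q′| = |q − p|/√3, and {q, q′} is a monochromatic pair of S′: every proper 4-coloring of the unit-distance graph on S′ assigns q and q′ the same color. In particular, from a mono-pair of length r one obtains a mono-pair of length r/√3. -/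
noncomputable def omegaRot : ℂ := (5 + (Real.sqrt 11 : ℝ) * Complex.I) / 6

/-!
Rotating `S` about `p` by `ω` is an isometry fixing `p`, so it carries the mono-pair `{p, q}` of `S`
to the mono-pair `{p, p + ω (q - p)}` of the rotated copy. In `S′` both pairs are still mono-pairs,
and chaining them through `p` makes `{q, q′}` one. The length `|q - q′| = |1 - ω| |q - p|` comes
from `|1 - ω|² = (1 + 11) / 36 = 1 / 3`.
-/

section MonoPair

variable {α β κ : Type*} [PseudoMetricSpace α] [PseudoMetricSpace β]

def IsMonoPair (κ : Type*) (S : Set α) (p q : α) : Prop :=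
  ∀ c : α → κ, (∀ x ∈ S, ∀ y ∈ S, dist x y = 1 → c x ≠ c y) → c p = c q

namespace IsMonoPair

variable {S T : Set α} {p q r : α}

theorem symm (h : IsMonoPair κ S p q) : IsMonoPair κ S q p :=
  fun c hc => (h c hc).symm

theorem trans (hpq : IsMonoPair κ S p q) (hqr : IsMonoPair κ S q r) :
    IsMonoPair κ S p r :=
  fun c hc => (hpq c hc).trans (hqr c hc)

theorem mono (h : IsMonoPair κ S p q) (hST : S ⊆ T) : IsMonoPair κ T p q :=
  fun c hc => h c fun x hx y hy => hc x (hST hx) y (hST hy)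

theorem image {f : α → β} (hf : Isometry f) (h : IsMonoPair κ S p q) :
    IsMonoPair κ (f '' S) (f p) (f q) := by
  intro c hc
  refine h (c ∘ f) fun x hx y hy hxy => ?_
  exact hc (f x) (Set.mem_image_of_mem f hx) (f y) (Set.mem_image_of_mem f hy)
    ((hf.dist_eq x y).trans hxy)

end IsMonoPair

end MonoPair

theorem isometry_rotate_about {ω : ℂ} (hω : ‖ω‖ = 1) (p : ℂ) :
    Isometry fun z => p + ω * (z - p) :=
  Isometry.of_dist_eq fun x y => by
    rw [dist_eq_norm, dist_eq_norm, show p + ω * (x - p) - (p + ω * (y - p)) = ω * (x - y) by ring,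
      norm_mul, hω, one_mul]

theorem normSq_omegaRot : Complex.normSq omegaRot = 1 := by
  have h11 : Real.sqrt 11 ^ 2 = 11 := Real.sq_sqrt (by norm_num)
  simp only [omegaRot, Complex.normSq_apply, Complex.div_re, Complex.div_im,
    Complex.add_re, Complex.add_im, Complex.mul_re, Complex.mul_im,
    Complex.I_re, Complex.I_im, Complex.ofReal_re, Complex.ofReal_im, Complex.re_ofNat,
    Complex.im_ofNat]
  nlinarith [h11]

theorem normSq_one_sub_omegaRot : Complex.normSq (1 - omegaRot) = 1 / 3 := by
  have h11 : Real.sqrt 11 ^ 2 = 11 := Real.sq_sqrt (by norm_num)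
  simp only [omegaRot, Complex.normSq_apply, Complex.sub_re, Complex.sub_im,
    Complex.div_re, Complex.div_im, Complex.add_re, Complex.add_im,
    Complex.mul_re, Complex.mul_im, Complex.I_re, Complex.I_im,
    Complex.ofReal_re, Complex.ofReal_im, Complex.one_re, Complex.one_im, Complex.re_ofNat,
    Complex.im_ofNat]
  nlinarith [h11]

theorem norm_omegaRot : ‖omegaRot‖ = 1 := by
  rw [Complex.norm_def, normSq_omegaRot, Real.sqrt_one]

theorem norm_one_sub_omegaRot : ‖1 - omegaRot‖ = 1 / Real.sqrt 3 := by
  rw [Complex.norm_def, normSq_one_sub_omegaRot, Real.sqrt_div' _ (by norm_num), Real.sqrt_one]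

theorem stmt_16_general (S : Set ℂ) (p q : ℂ)
    (hmono : ∀ c : ℂ → Fin 4,
      (∀ x ∈ S, ∀ y ∈ S, dist x y = 1 → c x ≠ c y) → c p = c q) :
    ‖omegaRot‖ = 1 ∧
    ‖q - (p + omegaRot * (q - p))‖ = ‖q - p‖ / Real.sqrt 3 ∧
    (∀ c : ℂ → Fin 4,
      (∀ x ∈ S ∪ (fun z => p + omegaRot * (z - p)) '' S,
       ∀ y ∈ S ∪ (fun z => p + omegaRot * (z - p)) '' S,
        dist x y = 1 → c x ≠ c y) →
      c q = c (p + omegaRot * (q - p))) := by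
  refine ⟨norm_omegaRot, ?_, ?_⟩
  · rw [show q - (p + omegaRot * (q - p)) = (1 - omegaRot) * (q - p) by ring, norm_mul,
      norm_one_sub_omegaRot, one_div_mul_eq_div]
  · have hpq : IsMonoPair (Fin 4) S p q := hmono
    have hrot := hpq.image (isometry_rotate_about norm_omegaRot p)
    simp only [sub_self, mul_zero, add_zero] at hrot
    exact (hpq.symm.mono Set.subset_union_left).trans (hrot.mono Set.subset_union_right)

theorem stmt_16 (S : Set ℂ) (hS : S.Finite) (p q : ℂ) (hp : p ∈ S) (hq : q ∈ S)
    (hmono : ∀ c : ℂ → Fin 4,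
      (∀ x ∈ S, ∀ y ∈ S, dist x y = 1 → c x ≠ c y) → c p = c q) :
    ‖omegaRot‖ = 1 ∧
    ‖q - (p + omegaRot * (q - p))‖ = ‖q - p‖ / Real.sqrt 3 ∧
    (∀ c : ℂ → Fin 4,
      (∀ x ∈ S ∪ (fun z => p + omegaRot * (z - p)) '' S,
       ∀ y ∈ S ∪ (fun z => p + omegaRot * (z - p)) '' S,
        dist x y = 1 → c x ≠ c y) →
      c q = c (p + omegaRot * (q - p))) :=
  stmt_16_general S p q hmono
end

section
/- Let S ⊆ ℝ² be finite, let p, q ∈ S be a monochromatic pair of S (every proper 4-coloring of the unit-distance graph on S assigns p and q the same color), and let n be a positive integer. Set v = q − p and S′ = ⋃_{j=0}^{n−1} (S + j·v), where S + j·v denotes the translate of S by j·v. Then the points p and p + n·v satisfy dist(p, p + n·v) = n·dist(p,q), and {p, p + n·v} is a monochromatic pair of S′: every proper 4-coloring of the unit-distance graph on S′ assigns p and p + n·v the same color. In particular, from a mono-pair of length r one obtains a mono-pair of length n·r. -/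
/-!
Translating a proper colouring of `S + j • v` back by `j • v` gives a proper colouring of `S`,
which therefore agrees on `p` and `q`; read in `S + j • v` this says that `p + j • v` and
`p + (j + 1) • v` get the same colour. Chaining these equalities for `j < n` links `p` to
`p + n • v`.
-/

section UnitDistanceColoring

variable {E α : Type*}

def IsProperUnitDistColoring [Dist E] (S : Set E) (c : E → α) : Prop :=
  ∀ x ∈ S, ∀ y ∈ S, dist x y = 1 → c x ≠ c y

theorem IsProperUnitDistColoring.mono [Dist E] {S T : Set E} {c : E → α}
    (hc : IsProperUnitDistColoring S c) (hTS : T ⊆ S) : IsProperUnitDistColoring T c :=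
  fun x hx y hy hxy => hc x (hTS hx) y (hTS hy) hxy

theorem IsProperUnitDistColoring.comp_add_right [SeminormedAddCommGroup E] {S : Set E}
    {c : E → α} {v : E} (hc : IsProperUnitDistColoring ((· + v) '' S) c) :
    IsProperUnitDistColoring S (fun x => c (x + v)) :=
  fun x hx y hy hxy =>
    hc _ (Set.mem_image_of_mem _ hx) _ (Set.mem_image_of_mem _ hy) (by rwa [dist_add_right])

end UnitDistanceColoring

theorem eq_of_forall_lt_eq_succ {α : Type*} {f : ℕ → α} {n : ℕ}
    (h : ∀ j < n, f j = f (j + 1)) : f 0 = f n := by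
  induction n with
  | zero => rfl
  | succ k ih => exact (ih fun j hj => h j (by omega)).trans (h k k.lt_succ_self)

theorem dist_self_add_nsmul_sub {E : Type*} [NormedAddCommGroup E] [NormedSpace ℝ E]
    (p q : E) (n : ℕ) : dist p (p + n • (q - p)) = n * dist p q := by
  rw [dist_self_add_right, RCLike.norm_nsmul ℝ, nsmul_eq_mul, ← dist_eq_norm, dist_comm]

theorem stmt_17_general (S : Set (EuclideanSpace ℝ (Fin 2))) (p q : EuclideanSpace ℝ (Fin 2))
    (n : ℕ)
    (hmono : ∀ c : EuclideanSpace ℝ (Fin 2) → Fin 4,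
      (∀ x ∈ S, ∀ y ∈ S, dist x y = 1 → c x ≠ c y) → c p = c q) :
    dist p (p + n • (q - p)) = n * dist p q ∧
    (∀ c : EuclideanSpace ℝ (Fin 2) → Fin 4,
      (∀ x ∈ ⋃ j ∈ Finset.range n, (fun x => x + j • (q - p)) '' S,
       ∀ y ∈ ⋃ j ∈ Finset.range n, (fun x => x + j • (q - p)) '' S,
        dist x y = 1 → c x ≠ c y) →
      c p = c (p + n • (q - p))) := by
  refine ⟨dist_self_add_nsmul_sub p q n, fun c hc => ?_⟩
  have hstep : ∀ j < n, c (p + j • (q - p)) = c (p + (j + 1) • (q - p)) := by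
    intro j hj
    have hcj : IsProperUnitDistColoring ((· + j • (q - p)) '' S) c :=
      IsProperUnitDistColoring.mono hc fun x hx => Set.mem_biUnion (Finset.mem_range.2 hj) hx
    have hq : q + j • (q - p) = p + (j + 1) • (q - p) := by
      rw [add_smul, one_smul]; abel
    simpa [hq] using hmono _ hcj.comp_add_right
  simpa using eq_of_forall_lt_eq_succ (f := fun j => c (p + j • (q - p))) hstep

theorem stmt_17 (S : Set (EuclideanSpace ℝ (Fin 2))) (hS : S.Finite) (p q : EuclideanSpace ℝ (Fin 2))
    (hp : p ∈ S) (hq : q ∈ S) (n : ℕ) (hn : 0 < n)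
    (hmono : ∀ c : EuclideanSpace ℝ (Fin 2) → Fin 4,
      (∀ x ∈ S, ∀ y ∈ S, dist x y = 1 → c x ≠ c y) → c p = c q) :
    dist p (p + n • (q - p)) = n * dist p q ∧
    (∀ c : EuclideanSpace ℝ (Fin 2) → Fin 4,
      (∀ x ∈ ⋃ j ∈ Finset.range n, (fun x => x + j • (q - p)) '' S,
       ∀ y ∈ ⋃ j ∈ Finset.range n, (fun x => x + j • (q - p)) '' S,
        dist x y = 1 → c x ≠ c y) →
      c p = c (p + n • (q - p))) :=
  stmt_17_general S p q n hmono
end
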